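/- arXiv:2304.11590 — 4 statements merged into one kernel-verified Lean document; each statement's English description precedes it below -/
import Mathlib

section
/- Let n ≥ 1, λ_1,…,λ_n pairwise distinct reals, α_1,…,α_n reals, and let y_1,…,y_n : ℝ × I → ℝ be smooth and nowhere vanishing (I an open interval, 0 ∉ I) satisfying (yxx), (yt) and the constraint (uy). Fix k ∈ {1,…,n} and set f_k := (∂_x y_k + α_k)/(2 y_k). Define (the Bäcklund transformation B_k): ỹ_j := ((∂_x y_j − 2 y_j f_k)² − α_j²)/(4(λ_j − λ_k) y_j) for j ≠ k, and ỹ_k := −y_k + 6t(f_k² + λ_k) − x − Σ_{j≠k}(ỹ_j + y_j); set α̃_j := α_j for j ≠ k and α̃_k := 1 − α_k. If each ỹ_j is nowhere vanishing, then ỹ_1,…,ỹ_n satisfy (yxx), (yt) and the constraint (uy) with parameters α̃_1,…,α̃_n and the same λ_1,…,λ_n. -/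
/-!
The `x`-part is a Darboux transformation. By (yxx) for `y_k`, `f = f_k` solves the Riccati
equation `∂ₓf = u - λ_k - f²`; from this, `∂ₓỹ_j = 2f(y_j - ỹ_j) - ∂ₓy_j` for `j ≠ k`, the
constraint gives `ũ = 2f² + 2λ_k - u`, and then `∂ₓỹ_k = α_k - 1 - 2fỹ_k`. Differentiating these
first-order relations once more gives (yxx) for `ỹ`.

For the `t`-part, (yt) together with its `x`-derivative (mixed partials commute) gives the time
derivatives of `y_j`, `∂ₓy_j` and `f`, after which (yt) for `ỹ_j`, `j ≠ k`, is a rational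
identity. For `ỹ_k` one differentiates its definition through the constraint. The key point is
that `∂ₜ(ỹ_j + y_j)` is a combination of `ỹ_j, y_j, ∂ₓy_j, ∂ₓ²y_j` with coefficients that do not
depend on `j`: the definition of `ỹ_j` eliminates `λ_j`. The sums over `j ≠ k` then reduce,
via (uy), to `u`, `∂ₓu` and `∂ₓ²u`.
-/

open Set Function

noncomputable section

/-- Partial derivative in the first (space) variable. -/
def pdx (u : ℝ → ℝ → ℝ) : ℝ → ℝ → ℝ := fun x t => deriv (fun x' => u x' t) x

/-- Partial derivative in the second (time) variable. -/
def pdt (u : ℝ → ℝ → ℝ) : ℝ → ℝ → ℝ := fun x t => deriv (fun t' => u x t') t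

/-- The constraint (uy): `u = x/(6t) + (y₁ + ⋯ + yₙ)/(3t)`. -/
def ucon (n : ℕ) (y : Fin n → ℝ → ℝ → ℝ) : ℝ → ℝ → ℝ :=
  fun x t => x / (6*t) + (∑ j, y j x t) / (3*t)

section Strip

variable {x t : ℝ}

theorem HasFDerivAt.hasDerivAt_fst_slice {E : Type*} [NormedAddCommGroup E] [NormedSpace ℝ E]
    {Φ : ℝ × ℝ → E} {Φ' : ℝ × ℝ →L[ℝ] E} (h : HasFDerivAt Φ Φ' (x, t)) :
    HasDerivAt (fun x' => Φ (x', t)) (Φ' (1, 0)) x :=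
  h.comp_hasDerivAt x ((hasDerivAt_id x).prodMk (hasDerivAt_const x t))

theorem HasFDerivAt.hasDerivAt_snd_slice {E : Type*} [NormedAddCommGroup E] [NormedSpace ℝ E]
    {Φ : ℝ × ℝ → E} {Φ' : ℝ × ℝ →L[ℝ] E} (h : HasFDerivAt Φ Φ' (x, t)) :
    HasDerivAt (fun t' => Φ (x, t')) (Φ' (0, 1)) t :=
  h.comp_hasDerivAt t ((hasDerivAt_const t x).prodMk (hasDerivAt_id t))

variable {g : ℝ → ℝ → ℝ}

theorem hasDerivAt_pdx (h : DifferentiableAt ℝ (uncurry g) (x, t)) :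
    HasDerivAt (fun x' => g x' t) (pdx g x t) x :=
  h.hasFDerivAt.hasDerivAt_fst_slice.differentiableAt.hasDerivAt

theorem hasDerivAt_pdt (h : DifferentiableAt ℝ (uncurry g) (x, t)) :
    HasDerivAt (fun t' => g x t') (pdt g x t) t :=
  h.hasFDerivAt.hasDerivAt_snd_slice.differentiableAt.hasDerivAt

theorem pdx_eq_fderiv (h : DifferentiableAt ℝ (uncurry g) (x, t)) :
    pdx g x t = fderiv ℝ (uncurry g) (x, t) (1, 0) :=
  h.hasFDerivAt.hasDerivAt_fst_slice.deriv

theorem pdt_eq_fderiv (h : DifferentiableAt ℝ (uncurry g) (x, t)) :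
    pdt g x t = fderiv ℝ (uncurry g) (x, t) (0, 1) :=
  h.hasFDerivAt.hasDerivAt_snd_slice.deriv

theorem HasDerivAt.pdx_eq {v : ℝ} (h : HasDerivAt (fun x' => g x' t) v x) : pdx g x t = v :=
  h.deriv

theorem HasDerivAt.pdt_eq {v : ℝ} (h : HasDerivAt (fun t' => g x t') v t) : pdt g x t = v :=
  h.deriv

theorem pdx_pdx_eq_of_hasDerivAt {p : ℝ → ℝ} {v : ℝ}
    (hg : ∀ x', HasDerivAt (fun x'' => g x'' t) (p x') x') (hp : HasDerivAt p v x) :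
    pdx (pdx g) x t = v :=
  (hp.congr_of_eventuallyEq (.of_forall fun x' => (hg x').deriv)).deriv

variable {I : Set ℝ}

theorem ContDiffOn.contDiffAt_uncurry (hg : ContDiffOn ℝ (⊤ : ℕ∞) (uncurry g) (univ ×ˢ I))
    (hI : IsOpen I) (ht : t ∈ I) : ContDiffAt ℝ (⊤ : ℕ∞) (uncurry g) (x, t) :=
  hg.contDiffAt ((isOpen_univ.prod hI).mem_nhds ⟨trivial, ht⟩)

theorem ContDiffOn.differentiableAt_uncurry (hg : ContDiffOn ℝ (⊤ : ℕ∞) (uncurry g) (univ ×ˢ I))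
    (hI : IsOpen I) (ht : t ∈ I) : DifferentiableAt ℝ (uncurry g) (x, t) :=
  (hg.contDiffAt_uncurry hI ht).differentiableAt (by simp)

theorem contDiffOn_pdx (hg : ContDiffOn ℝ (⊤ : ℕ∞) (uncurry g) (univ ×ˢ I)) (hI : IsOpen I) :
    ContDiffOn ℝ (⊤ : ℕ∞) (uncurry (pdx g)) (univ ×ˢ I) := by
  refine ((hg.fderiv_of_isOpen (isOpen_univ.prod hI) (by norm_cast)).clm_apply
    (contDiffOn_const (c := ((1 : ℝ), (0 : ℝ))))).congr ?_
  rintro ⟨x, t⟩ ⟨-, ht⟩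
  exact pdx_eq_fderiv (hg.differentiableAt_uncurry hI ht)

theorem pdt_pdx_eq_pdx_pdt (hg : ContDiffOn ℝ (⊤ : ℕ∞) (uncurry g) (univ ×ˢ I)) (hI : IsOpen I)
    (ht : t ∈ I) : pdt (pdx g) x t = pdx (pdt g) x t := by
  have hf := hg.contDiffAt_uncurry hI ht (x := x)
  set D := fderiv ℝ (fderiv ℝ (uncurry g)) (x, t)
  have hD : HasFDerivAt (fderiv ℝ (uncurry g)) D (x, t) :=
    ((hf.fderiv_right (m := 1) (by norm_cast)).differentiableAt one_ne_zero).hasFDerivAt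
  have hxt : HasDerivAt (fun t' => pdx g x t') (D (0, 1) (1, 0)) t := by
    refine ((ContinuousLinearMap.apply ℝ ℝ ((1 : ℝ), (0 : ℝ))).hasFDerivAt.comp (x, t)
      hD).hasDerivAt_snd_slice.congr_of_eventuallyEq ?_
    filter_upwards [hI.mem_nhds ht] with t' ht'
    exact pdx_eq_fderiv (hg.differentiableAt_uncurry hI ht')
  have htx : HasDerivAt (fun x' => pdt g x' t) (D (1, 0) (0, 1)) x :=
    ((ContinuousLinearMap.apply ℝ ℝ ((0 : ℝ), (1 : ℝ))).hasFDerivAt.comp (x, t)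
      hD).hasDerivAt_fst_slice.congr_of_eventuallyEq
      (.of_forall fun x' => pdt_eq_fderiv (hg.differentiableAt_uncurry hI ht))
  have hsymm := hf.isSymmSndFDerivAt (by
    rw [minSmoothness_of_isRCLikeNormedField]; exact WithTop.coe_le_coe.2 le_top)
  exact hxt.deriv.trans ((hsymm _ _).trans htx.deriv.symm)

end Strip

def yxxRhs (α lam u Y P : ℝ) : ℝ := (P ^ 2 - α ^ 2) / (2 * Y) + 2 * (u - lam) * Y

def ytRhs (lam u ux Y P : ℝ) : ℝ := 2 * ux * Y - 2 * (u + 2 * lam) * P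

def SatisfiesYxx (n : ℕ) (lam alp : Fin n → ℝ) (I : Set ℝ) (y : Fin n → ℝ → ℝ → ℝ) : Prop :=
  ∀ j x t, t ∈ I →
    pdx (pdx (y j)) x t = yxxRhs (alp j) (lam j) (ucon n y x t) (y j x t) (pdx (y j) x t)

def SatisfiesYt (n : ℕ) (lam : Fin n → ℝ) (I : Set ℝ) (y : Fin n → ℝ → ℝ → ℝ) : Prop :=
  ∀ j x t, t ∈ I →
    pdt (y j) x t = ytRhs (lam j) (ucon n y x t) (pdx (ucon n y) x t) (y j x t) (pdx (y j) x t)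

structure IsSolution (n : ℕ) (lam alp : Fin n → ℝ) (I : Set ℝ) (y : Fin n → ℝ → ℝ → ℝ) :
    Prop where
  isOpen : IsOpen I
  zero_notMem : (0 : ℝ) ∉ I
  contDiffOn : ∀ j, ContDiffOn ℝ (⊤ : ℕ∞) (uncurry (y j)) (univ ×ˢ I)
  ne_zero : ∀ j x t, t ∈ I → y j x t ≠ 0
  yxx : SatisfiesYxx n lam alp I y
  yt : SatisfiesYt n lam I y

section Constraint

variable {n : ℕ} {y : Fin n → ℝ → ℝ → ℝ} {x t : ℝ}

theorem sum_eq_ucon (ht : t ≠ 0) : ∑ j, y j x t = 3 * t * ucon n y x t - x / 2 := by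
  unfold ucon
  field_simp
  ring

theorem hasDerivAt_ucon {p : Fin n → ℝ} (hy : ∀ j, HasDerivAt (fun x' => y j x' t) (p j) x) :
    HasDerivAt (fun x' => ucon n y x' t) (1 / (6 * t) + (∑ j, p j) / (3 * t)) x :=
  ((hasDerivAt_id x).div_const _).add ((HasDerivAt.fun_sum fun j _ => hy j).div_const _)

theorem pdx_ucon (hy : ∀ j, DifferentiableAt ℝ (fun x' => y j x' t) x) :
    pdx (ucon n y) x t = 1 / (6 * t) + (∑ j, pdx (y j) x t) / (3 * t) :=
  (hasDerivAt_ucon fun j => (hy j).hasDerivAt).deriv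

theorem sum_pdx_eq (ht : t ≠ 0) (hy : ∀ j, DifferentiableAt ℝ (fun x' => y j x' t) x) :
    ∑ j, pdx (y j) x t = 3 * t * pdx (ucon n y) x t - 1 / 2 := by
  rw [pdx_ucon hy]
  field_simp
  ring

theorem sum_pdx_pdx_eq (ht : t ≠ 0) (hy : ∀ j x', DifferentiableAt ℝ (fun x'' => y j x'' t) x')
    (hy' : ∀ j, DifferentiableAt ℝ (fun x' => pdx (y j) x' t) x) :
    ∑ j, pdx (pdx (y j)) x t = 3 * t * pdx (pdx (ucon n y)) x t := by
  have hu : HasDerivAt (fun x' => pdx (ucon n y) x' t)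
      ((∑ j, pdx (pdx (y j)) x t) / (3 * t)) x := by
    rw [funext fun x' => pdx_ucon fun j => hy j x']
    exact ((HasDerivAt.fun_sum fun j _ => (hy' j).hasDerivAt).div_const _).const_add _
  rw [show pdx (pdx (ucon n y)) x t = _ from hu.deriv]
  field_simp

end Constraint

namespace IsSolution

variable {n : ℕ} {lam alp : Fin n → ℝ} {I : Set ℝ} {y : Fin n → ℝ → ℝ → ℝ} {x t : ℝ}

theorem ne_zero_of_mem (hy : IsSolution n lam alp I y) (ht : t ∈ I) : t ≠ 0 :=
  fun h => hy.zero_notMem (h ▸ ht)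

theorem differentiableAt (hy : IsSolution n lam alp I y) (j : Fin n) (ht : t ∈ I) :
    DifferentiableAt ℝ (uncurry (y j)) (x, t) :=
  (hy.contDiffOn j).differentiableAt_uncurry hy.isOpen ht

theorem differentiableAt_pdx (hy : IsSolution n lam alp I y) (j : Fin n) (ht : t ∈ I) :
    DifferentiableAt ℝ (uncurry (pdx (y j))) (x, t) :=
  (contDiffOn_pdx (hy.contDiffOn j) hy.isOpen).differentiableAt_uncurry hy.isOpen ht

theorem contDiffOn_ucon (hy : IsSolution n lam alp I y) :
    ContDiffOn ℝ (⊤ : ℕ∞) (uncurry (ucon n y)) (univ ×ˢ I) := by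
  have hlin : ∀ c : ℝ, c ≠ 0 → ContDiffOn ℝ (⊤ : ℕ∞) (fun p : ℝ × ℝ => c * p.2) (univ ×ˢ I) :=
    fun c _ => (contDiff_const.mul contDiff_snd).contDiffOn
  have hne : ∀ c : ℝ, c ≠ 0 → ∀ p : ℝ × ℝ, p ∈ univ ×ˢ I → c * p.2 ≠ 0 :=
    fun c hc p hp => mul_ne_zero hc (hy.ne_zero_of_mem hp.2)
  exact (contDiff_fst.contDiffOn.div (hlin 6 (by norm_num)) (hne 6 (by norm_num))).add
    ((ContDiffOn.sum fun j _ => hy.contDiffOn j).div (hlin 3 (by norm_num)) (hne 3 (by norm_num)))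

theorem sum_pdx_eq (hy : IsSolution n lam alp I y) (ht : t ∈ I) :
    ∑ j, pdx (y j) x t = 3 * t * pdx (ucon n y) x t - 1 / 2 :=
  _root_.sum_pdx_eq (hy.ne_zero_of_mem ht)
    fun j => (hasDerivAt_pdx (hy.differentiableAt j ht)).differentiableAt

theorem sum_pdx_pdx_eq (hy : IsSolution n lam alp I y) (ht : t ∈ I) :
    ∑ j, pdx (pdx (y j)) x t = 3 * t * pdx (pdx (ucon n y)) x t :=
  _root_.sum_pdx_pdx_eq (hy.ne_zero_of_mem ht)
    (fun j _ => (hasDerivAt_pdx (hy.differentiableAt j ht)).differentiableAt)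
    fun j => (hasDerivAt_pdx (hy.differentiableAt_pdx j ht)).differentiableAt

theorem pdt_pdx (hy : IsSolution n lam alp I y) (j : Fin n) (ht : t ∈ I) :
    pdt (pdx (y j)) x t = 2 * pdx (pdx (ucon n y)) x t * y j x t
      - 2 * (ucon n y x t + 2 * lam j) * pdx (pdx (y j)) x t := by
  have hu := hy.contDiffOn_ucon.differentiableAt_uncurry hy.isOpen ht (x := x)
  have hu' := (contDiffOn_pdx hy.contDiffOn_ucon hy.isOpen).differentiableAt_uncurry hy.isOpen ht
    (x := x)
  rw [pdt_pdx_eq_pdx_pdt (hy.contDiffOn j) hy.isOpen ht]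
  refine HasDerivAt.deriv ?_
  rw [funext fun x' => hy.yt j x' t ht]
  refine ((((hasDerivAt_pdx hu').const_mul 2).fun_mul
    (hasDerivAt_pdx (hy.differentiableAt j ht))).fun_sub
      ((((hasDerivAt_pdx hu).add_const (2 * lam j)).const_mul 2).fun_mul
        (hasDerivAt_pdx (hy.differentiableAt_pdx j ht)))).congr_deriv ?_
  ring

end IsSolution

def backlundF (α : ℝ) (Y : ℝ → ℝ → ℝ) (x t : ℝ) : ℝ := (pdx Y x t + α) / (2 * Y x t)

def backlundOff (α lam mu : ℝ) (Y F : ℝ → ℝ → ℝ) (x t : ℝ) : ℝ :=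
  ((pdx Y x t - 2 * Y x t * F x t) ^ 2 - α ^ 2) / (4 * (lam - mu) * Y x t)

def backlund (n : ℕ) (lam alp : Fin n → ℝ) (k : Fin n) (y : Fin n → ℝ → ℝ → ℝ) (j : Fin n)
    (x t : ℝ) : ℝ :=
  if j = k then
    -y k x t + 6 * t * (backlundF (alp k) (y k) x t ^ 2 + lam k) - x
      - ∑ i ∈ Finset.univ.erase k,
          (backlundOff (alp i) (lam i) (lam k) (y i) (backlundF (alp k) (y k)) x t + y i x t)
  else backlundOff (alp j) (lam j) (lam k) (y j) (backlundF (alp k) (y k)) x t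

section Backlund

variable {n : ℕ} {lam alp : Fin n → ℝ} {y : Fin n → ℝ → ℝ → ℝ} {j k : Fin n} {x t : ℝ}

theorem backlund_of_ne (h : j ≠ k) :
    backlund n lam alp k y j
      = backlundOff (alp j) (lam j) (lam k) (y j) (backlundF (alp k) (y k)) := by
  funext x t
  simp only [backlund, if_neg h]

theorem backlund_self :
    backlund n lam alp k y k x t
      = -y k x t + 6 * t * (backlundF (alp k) (y k) x t ^ 2 + lam k) - x
        - ∑ i ∈ Finset.univ.erase k,
            (backlundOff (alp i) (lam i) (lam k) (y i) (backlundF (alp k) (y k)) x t + y i x t) :=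
  if_pos rfl

theorem sum_erase_backlund :
    ∑ i ∈ Finset.univ.erase k, backlund n lam alp k y i x t
      = ∑ i ∈ Finset.univ.erase k,
          backlundOff (alp i) (lam i) (lam k) (y i) (backlundF (alp k) (y k)) x t :=
  Finset.sum_congr rfl fun i hi => by rw [backlund_of_ne (Finset.ne_of_mem_erase hi)]

theorem sum_backlund_add_sum :
    ∑ i, backlund n lam alp k y i x t + ∑ i, y i x t
      = 6 * t * (backlundF (alp k) (y k) x t ^ 2 + lam k) - x := by
  rw [← Finset.add_sum_erase _ _ (Finset.mem_univ k), sum_erase_backlund, backlund_self,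
    ← Finset.add_sum_erase _ _ (Finset.mem_univ k), Finset.sum_add_distrib]
  ring

theorem ucon_backlund (ht : t ≠ 0) :
    ucon n (backlund n lam alp k y) x t
      = 2 * backlundF (alp k) (y k) x t ^ 2 + 2 * lam k - ucon n y x t := by
  have h := sum_backlund_add_sum (lam := lam) (alp := alp) (y := y) (k := k) (x := x) (t := t)
  rw [sum_eq_ucon ht, sum_eq_ucon ht] at h
  refine mul_left_cancel₀ (mul_ne_zero three_ne_zero ht) ?_
  linear_combination h

theorem sum_erase_backlundOff :
    ∑ i ∈ Finset.univ.erase k,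
        backlundOff (alp i) (lam i) (lam k) (y i) (backlundF (alp k) (y k)) x t
      = 6 * t * (backlundF (alp k) (y k) x t ^ 2 + lam k) - x - ∑ i, y i x t
        - backlund n lam alp k y k x t := by
  rw [← sum_erase_backlund, Finset.sum_erase_eq_sub (Finset.mem_univ k)]
  linear_combination
    sum_backlund_add_sum (lam := lam) (alp := alp) (y := y) (k := k) (x := x) (t := t)

theorem mul_backlundOff {α lam mu : ℝ} {Y F : ℝ → ℝ → ℝ} (hY : Y x t ≠ 0) (hl : lam ≠ mu) :
    4 * (lam - mu) * Y x t * backlundOff α lam mu Y F x t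
      = (pdx Y x t - 2 * Y x t * F x t) ^ 2 - α ^ 2 := by
  have := sub_ne_zero.2 hl
  unfold backlundOff
  field_simp

theorem pdx_eq_backlundF {α : ℝ} {Y : ℝ → ℝ → ℝ} (h : Y x t ≠ 0) :
    pdx Y x t = 2 * backlundF α Y x t * Y x t - α := by
  unfold backlundF
  field_simp
  ring

end Backlund

section Identities

variable {α lam mu u ux v vx Y P F N : ℝ}

theorem yxxRhs_backlundOff (hY : Y ≠ 0) (hN0 : N ≠ 0)
    (hN : 4 * (lam - mu) * Y * N = (P - 2 * Y * F) ^ 2 - α ^ 2) :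
    2 * (u - mu - F ^ 2) * (Y - N) + 2 * F * (P - (2 * F * (Y - N) - P)) - yxxRhs α lam u Y P
      = yxxRhs α lam (2 * F ^ 2 + 2 * mu - u) N (2 * F * (Y - N) - P) := by
  unfold yxxRhs
  linear_combination (norm := skip) (Y + N) / (2 * Y * N) * hN
  field_simp
  ring

theorem yxxRhs_backlund_self (hN0 : N ≠ 0) :
    -(2 * (u - mu - F ^ 2) * N + 2 * F * (α - 1 - 2 * F * N))
      = yxxRhs (1 - α) mu (2 * F ^ 2 + 2 * mu - u) N (α - 1 - 2 * F * N) := by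
  unfold yxxRhs
  field_simp
  ring

theorem ytRhs_backlundOff_add_ytRhs (hY : Y ≠ 0)
    (hN : 4 * (lam - mu) * Y * N = (P - 2 * Y * F) ^ 2 - α ^ 2) :
    ytRhs lam v vx N (2 * F * (Y - N) - P) + ytRhs lam u ux Y P
      = (2 * vx + 4 * F * v + 8 * F * mu) * N
        + (2 * ux - 4 * F * v - 8 * F * mu - 8 * F * (u - mu - F ^ 2)) * Y
        + (2 * v - 2 * u - 8 * F ^ 2) * P + 4 * F * yxxRhs α lam u Y P := by
  unfold ytRhs yxxRhs
  linear_combination (norm := skip) (2 * F / Y) * hN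
  field_simp
  ring

end Identities

namespace IsSolution

variable {n : ℕ} {lam alp : Fin n → ℝ} {I : Set ℝ} {y : Fin n → ℝ → ℝ → ℝ} {j k : Fin n}
  {x t : ℝ}

theorem hasDerivAt_backlundF_x (hy : IsSolution n lam alp I y) (ht : t ∈ I) :
    HasDerivAt (fun x' => backlundF (alp k) (y k) x' t)
      (ucon n y x t - lam k - backlundF (alp k) (y k) x t ^ 2) x := by
  have hk := hy.ne_zero k x t ht
  refine (((hasDerivAt_pdx (hy.differentiableAt_pdx k ht)).add_const (alp k)).fun_div
    ((hasDerivAt_pdx (hy.differentiableAt k ht)).const_mul 2)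
      (mul_ne_zero two_ne_zero hk)).congr_deriv ?_
  rw [hy.yxx k x t ht]
  unfold yxxRhs backlundF
  field_simp
  ring

theorem hasDerivAt_backlundOff_x (hy : IsSolution n lam alp I y) (hjk : lam j ≠ lam k)
    (ht : t ∈ I) :
    HasDerivAt (fun x' => backlundOff (alp j) (lam j) (lam k) (y j) (backlundF (alp k) (y k)) x' t)
      (2 * backlundF (alp k) (y k) x t
          * (y j x t - backlundOff (alp j) (lam j) (lam k) (y j) (backlundF (alp k) (y k)) x t)
        - pdx (y j) x t) x := by
  have hj := hy.ne_zero j x t ht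
  have hY := hasDerivAt_pdx (hy.differentiableAt j ht) (x := x)
  refine (((((hasDerivAt_pdx (hy.differentiableAt_pdx j ht)).fun_sub
    ((hY.const_mul 2).fun_mul (hy.hasDerivAt_backlundF_x ht))).fun_pow 2).sub_const _).fun_div
      (hY.const_mul _)
        (mul_ne_zero (mul_ne_zero four_ne_zero (sub_ne_zero.2 hjk)) hj)).congr_deriv ?_
  rw [hy.yxx j x t ht]
  unfold yxxRhs backlundOff
  field_simp
  ring

theorem hasDerivAt_ucon_backlund_x (hy : IsSolution n lam alp I y) (ht : t ∈ I) :
    HasDerivAt (fun x' => ucon n (backlund n lam alp k y) x' t)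
      (4 * backlundF (alp k) (y k) x t
          * (ucon n y x t - lam k - backlundF (alp k) (y k) x t ^ 2)
        - pdx (ucon n y) x t) x := by
  rw [funext fun x' => ucon_backlund (hy.ne_zero_of_mem ht) (x := x')]
  refine ((((hy.hasDerivAt_backlundF_x ht).fun_pow 2).const_mul 2).add_const _).fun_sub
    (hasDerivAt_pdx (hy.contDiffOn_ucon.differentiableAt_uncurry hy.isOpen ht)) |>.congr_deriv ?_
  ring

theorem hasDerivAt_backlund_self_x (hy : IsSolution n lam alp I y) (hlam : Injective lam)
    (ht : t ∈ I) :
    HasDerivAt (fun x' => backlund n lam alp k y k x' t)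
      (alp k - 1 - 2 * backlundF (alp k) (y k) x t * backlund n lam alp k y k x t) x := by
  have hoff : ∀ i ∈ Finset.univ.erase k,
      HasDerivAt (fun x' => backlundOff (alp i) (lam i) (lam k) (y i) (backlundF (alp k) (y k)) x' t
          + y i x' t)
        (2 * backlundF (alp k) (y k) x t * y i x t
          - 2 * backlundF (alp k) (y k) x t
            * backlundOff (alp i) (lam i) (lam k) (y i) (backlundF (alp k) (y k)) x t) x :=
    fun i hi => ((hy.hasDerivAt_backlundOff_x (hlam.ne (Finset.ne_of_mem_erase hi)) ht).fun_add
      (hasDerivAt_pdx (hy.differentiableAt i ht))).congr_deriv (by ring)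
  have hF := hy.hasDerivAt_backlundF_x (k := k) (x := x) ht
  have h := ((((hasDerivAt_pdx (hy.differentiableAt k ht)).fun_neg).fun_add
    (((hF.fun_pow 2).add_const (lam k)).const_mul (6 * t))).fun_sub
      (hasDerivAt_id' x)).fun_sub (HasDerivAt.fun_sum hoff)
  refine (h.congr_of_eventuallyEq (.of_forall fun x' => backlund_self)).congr_deriv ?_
  rw [Finset.sum_sub_distrib, ← Finset.mul_sum, ← Finset.mul_sum, sum_erase_backlundOff,
    Finset.sum_erase_eq_sub (Finset.mem_univ k), sum_eq_ucon (hy.ne_zero_of_mem ht),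
    pdx_eq_backlundF (α := alp k) (hy.ne_zero k x t ht)]
  ring

theorem backlund_yxx (hy : IsSolution n lam alp I y) (hlam : Injective lam)
    (hne : ∀ j x t, t ∈ I → backlund n lam alp k y j x t ≠ 0) :
    SatisfiesYxx n lam (update alp k (1 - alp k)) I (backlund n lam alp k y) := by
  intro j x t ht
  have hF := hy.hasDerivAt_backlundF_x (k := k) ht (x := x)
  have hN0 := hne j x t ht
  rw [ucon_backlund (hy.ne_zero_of_mem ht)]
  rcases eq_or_ne j k with rfl | hjk
  · have hN := fun x' => hy.hasDerivAt_backlund_self_x (k := j) hlam ht (x := x')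
    rw [pdx_pdx_eq_of_hasDerivAt hN (((hF.const_mul 2).fun_mul (hN x)).const_sub _),
      (hN x).pdx_eq, update_self]
    exact yxxRhs_backlund_self hN0
  · have hN := fun x' => hy.hasDerivAt_backlundOff_x (k := k) (hlam.ne hjk) ht (x := x')
    rw [backlund_of_ne hjk] at hN0 ⊢
    rw [pdx_pdx_eq_of_hasDerivAt hN (((hF.const_mul 2).fun_mul
        ((hasDerivAt_pdx (hy.differentiableAt j ht)).fun_sub (hN x))).fun_sub
          (hasDerivAt_pdx (hy.differentiableAt_pdx j ht))),
      (hN x).pdx_eq, update_of_ne hjk, hy.yxx j x t ht]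
    exact yxxRhs_backlundOff (hy.ne_zero j x t ht) hN0
      (mul_backlundOff (hy.ne_zero j x t ht) (hlam.ne hjk))

theorem hasDerivAt_backlundF_t (hy : IsSolution n lam alp I y) (ht : t ∈ I) :
    HasDerivAt (fun t' => backlundF (alp k) (y k) x t')
      (pdx (pdx (ucon n y)) x t - 2 * backlundF (alp k) (y k) x t * pdx (ucon n y) x t
        - 2 * (ucon n y x t + 2 * lam k)
          * (ucon n y x t - lam k - backlundF (alp k) (y k) x t ^ 2)) t := by
  have hk := hy.ne_zero k x t ht
  refine (((hasDerivAt_pdt (hy.differentiableAt_pdx k ht)).add_const (alp k)).fun_div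
    ((hasDerivAt_pdt (hy.differentiableAt k ht)).const_mul 2)
      (mul_ne_zero two_ne_zero hk)).congr_deriv ?_
  rw [hy.pdt_pdx k ht, hy.yt k x t ht, hy.yxx k x t ht]
  unfold ytRhs yxxRhs backlundF
  field_simp
  ring

theorem hasDerivAt_backlund_t_of_ne (hy : IsSolution n lam alp I y) (hlam : Injective lam)
    (hjk : j ≠ k) (ht : t ∈ I) :
    HasDerivAt (fun t' => backlund n lam alp k y j x t')
      (ytRhs (lam j) (ucon n (backlund n lam alp k y) x t)
        (pdx (ucon n (backlund n lam alp k y)) x t)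
        (backlund n lam alp k y j x t) (pdx (backlund n lam alp k y j) x t)) t := by
  have hj := hy.ne_zero j x t ht
  have hl : lam j - lam k ≠ 0 := sub_ne_zero.2 (hlam.ne hjk)
  have hY := hasDerivAt_pdt (hy.differentiableAt j ht) (x := x)
  rw [ucon_backlund (hy.ne_zero_of_mem ht), (hy.hasDerivAt_ucon_backlund_x ht).pdx_eq,
    backlund_of_ne hjk, (hy.hasDerivAt_backlundOff_x (hlam.ne hjk) ht).pdx_eq]
  refine (((((hasDerivAt_pdt (hy.differentiableAt_pdx j ht)).fun_sub
    ((hY.const_mul 2).fun_mul (hy.hasDerivAt_backlundF_t ht))).fun_pow 2).sub_const _).fun_div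
      (hY.const_mul _) (mul_ne_zero (mul_ne_zero four_ne_zero hl) hj)).congr_deriv ?_
  rw [hy.pdt_pdx j ht, hy.yt j x t ht, hy.yxx j x t ht]
  unfold ytRhs yxxRhs backlundOff
  field_simp
  ring

theorem hasDerivAt_backlundOff_add_t (hy : IsSolution n lam alp I y) (hlam : Injective lam)
    (hjk : j ≠ k) (ht : t ∈ I) :
    HasDerivAt
      (fun t' =>
        backlundOff (alp j) (lam j) (lam k) (y j) (backlundF (alp k) (y k)) x t' + y j x t')
      ((2 * pdx (ucon n (backlund n lam alp k y)) x t
            + 4 * backlundF (alp k) (y k) x t * ucon n (backlund n lam alp k y) x t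
            + 8 * backlundF (alp k) (y k) x t * lam k)
          * backlundOff (alp j) (lam j) (lam k) (y j) (backlundF (alp k) (y k)) x t
        + (2 * pdx (ucon n y) x t
            - 4 * backlundF (alp k) (y k) x t * ucon n (backlund n lam alp k y) x t
            - 8 * backlundF (alp k) (y k) x t * lam k
            - 8 * backlundF (alp k) (y k) x t
              * (ucon n y x t - lam k - backlundF (alp k) (y k) x t ^ 2)) * y j x t
        + (2 * ucon n (backlund n lam alp k y) x t - 2 * ucon n y x t
            - 8 * backlundF (alp k) (y k) x t ^ 2) * pdx (y j) x t
        + 4 * backlundF (alp k) (y k) x t * pdx (pdx (y j)) x t) t := by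
  have h := (hy.hasDerivAt_backlund_t_of_ne (x := x) hlam hjk ht).fun_add
    (hasDerivAt_pdt (hy.differentiableAt j ht) (x := x))
  rw [backlund_of_ne hjk, (hy.hasDerivAt_backlundOff_x (hlam.ne hjk) ht).pdx_eq] at h
  refine h.congr_deriv ?_
  rw [hy.yt j x t ht, hy.yxx j x t ht]
  exact ytRhs_backlundOff_add_ytRhs (hy.ne_zero j x t ht)
    (mul_backlundOff (hy.ne_zero j x t ht) (hlam.ne hjk))

theorem hasDerivAt_backlund_self_t (hy : IsSolution n lam alp I y) (hlam : Injective lam)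
    (ht : t ∈ I) :
    HasDerivAt (fun t' => backlund n lam alp k y k x t')
      (ytRhs (lam k) (ucon n (backlund n lam alp k y) x t)
        (pdx (ucon n (backlund n lam alp k y)) x t)
        (backlund n lam alp k y k x t) (pdx (backlund n lam alp k y k) x t)) t := by
  have hsum := HasDerivAt.fun_sum (u := Finset.univ.erase k) fun i hi =>
    hy.hasDerivAt_backlundOff_add_t (x := x) hlam (Finset.ne_of_mem_erase hi) ht
  have hF := hy.hasDerivAt_backlundF_t (k := k) (x := x) ht
  have h := ((((hasDerivAt_pdt (hy.differentiableAt k ht (x := x))).fun_neg).fun_add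
    (((hasDerivAt_id' t).const_mul 6).fun_mul ((hF.fun_pow 2).add_const (lam k)))).sub_const
      x).fun_sub hsum
  refine (h.congr_of_eventuallyEq (.of_forall fun t' => backlund_self)).congr_deriv ?_
  simp only [Finset.sum_add_distrib, ← Finset.mul_sum]
  rw [sum_erase_backlundOff, Finset.sum_erase_eq_sub (Finset.mem_univ k),
    Finset.sum_erase_eq_sub (Finset.mem_univ k), Finset.sum_erase_eq_sub (Finset.mem_univ k),
    sum_eq_ucon (hy.ne_zero_of_mem ht), hy.sum_pdx_eq ht, hy.sum_pdx_pdx_eq ht,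
    (hy.hasDerivAt_backlund_self_x hlam ht).pdx_eq, (hy.hasDerivAt_ucon_backlund_x ht).pdx_eq,
    ucon_backlund (hy.ne_zero_of_mem ht), hy.yt k x t ht, hy.yxx k x t ht,
    pdx_eq_backlundF (α := alp k) (hy.ne_zero k x t ht)]
  have hk := hy.ne_zero k x t ht
  have ht0 := hy.ne_zero_of_mem ht
  unfold ytRhs yxxRhs
  field_simp
  ring

theorem backlund_yt (hy : IsSolution n lam alp I y) (hlam : Injective lam) :
    SatisfiesYt n lam I (backlund n lam alp k y) := by
  intro j x t ht
  rcases eq_or_ne j k with rfl | hjk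
  · exact (hy.hasDerivAt_backlund_self_t hlam ht).pdt_eq
  · exact (hy.hasDerivAt_backlund_t_of_ne hlam hjk ht).pdt_eq

end IsSolution

theorem statement13_general
    (n : ℕ)
    (lam alp : Fin n → ℝ) (hlam : Function.Injective lam)
    (a b : ℝ) (I : Set ℝ) (hI : I = Set.Ioo a b) (hI0 : (0:ℝ) ∉ I)
    (y : Fin n → ℝ → ℝ → ℝ)
    (hysmooth : ∀ j, ContDiffOn ℝ (⊤ : ℕ∞) (uncurry (y j)) (univ ×ˢ I))
    (hyne : ∀ j x t, t ∈ I → y j x t ≠ 0)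
    -- system (yxx)
    (hyxx : ∀ j x t, t ∈ I →
      pdx (pdx (y j)) x t
        = ((pdx (y j) x t)^2 - (alp j)^2) / (2 * y j x t)
          + 2 * (ucon n y x t - lam j) * y j x t)
    -- system (yt)
    (hyt : ∀ j x t, t ∈ I →
      pdt (y j) x t
        = 2 * pdx (ucon n y) x t * y j x t
          - 2 * (ucon n y x t + 2 * lam j) * pdx (y j) x t)
    -- the auxiliary function f_k
    (k : Fin n)
    (fk : ℝ → ℝ → ℝ)
    (hfk : ∀ x t, fk x t = (pdx (y k) x t + alp k) / (2 * y k x t))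
    -- the transformed functions ỹ and parameters α̃
    (ny : Fin n → ℝ → ℝ → ℝ)
    (hny : ∀ j, j ≠ k → ∀ x t,
      ny j x t = ((pdx (y j) x t - 2 * y j x t * fk x t)^2 - (alp j)^2)
                  / (4 * (lam j - lam k) * y j x t))
    (hnyk : ∀ x t,
      ny k x t = -(y k x t) + 6*t*((fk x t)^2 + lam k) - x
                  - ∑ j ∈ Finset.univ.erase k, (ny j x t + y j x t))
    (nalp : Fin n → ℝ)
    (hnalp : ∀ j, j ≠ k → nalp j = alp j) (hnalpk : nalp k = 1 - alp k)
    -- assuming the transformed functions are nowhere vanishing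
    (hnyne : ∀ j x t, t ∈ I → ny j x t ≠ 0) :
    -- ỹ satisfies (yxx) and (yt) with ũ given by the constraint (uy) for ỹ
    (∀ j x t, t ∈ I →
      pdx (pdx (ny j)) x t
        = ((pdx (ny j) x t)^2 - (nalp j)^2) / (2 * ny j x t)
          + 2 * (ucon n ny x t - lam j) * ny j x t)
    ∧ (∀ j x t, t ∈ I →
      pdt (ny j) x t
        = 2 * pdx (ucon n ny) x t * ny j x t
          - 2 * (ucon n ny x t + 2 * lam j) * pdx (ny j) x t) := by
  have hy : IsSolution n lam alp I y := ⟨hI ▸ isOpen_Ioo, hI0, hysmooth, hyne, hyxx, hyt⟩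
  obtain rfl : fk = backlundF (alp k) (y k) := funext fun x => funext (hfk x)
  obtain rfl : ny = backlund n lam alp k y := by
    funext j x t
    rcases eq_or_ne j k with rfl | hjk
    · rw [hnyk, backlund_self]
      congr 1
      exact Finset.sum_congr rfl fun i hi => by rw [hny i (Finset.ne_of_mem_erase hi)]; rfl
    · rw [hny j hjk x t, backlund_of_ne hjk, backlundOff]
  obtain rfl : nalp = update alp k (1 - alp k) := by
    funext j
    rcases eq_or_ne j k with rfl | hjk
    · rw [hnalpk, update_self]
    · rw [hnalp j hjk, update_of_ne hjk]
  exact ⟨hy.backlund_yxx hlam hnyne, hy.backlund_yt hlam⟩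

/-- the Bäcklund transformation `B_k` (built from `f_k = (∂ₓy_k + α_k)/(2y_k)`)
maps solutions of (yxx), (yt), (uy) with parameters `α` to solutions with parameters `α̃`,
where `α̃_k = 1 − α_k` and `α̃_j = α_j` for `j ≠ k`. -/
theorem statement13
    (n : ℕ) (hn : 1 ≤ n)
    (lam alp : Fin n → ℝ) (hlam : Function.Injective lam)
    (a b : ℝ) (I : Set ℝ) (hI : I = Set.Ioo a b) (hI0 : (0:ℝ) ∉ I)
    (y : Fin n → ℝ → ℝ → ℝ)
    (hysmooth : ∀ j, ContDiffOn ℝ (⊤ : ℕ∞) (uncurry (y j)) (univ ×ˢ I))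
    (hyne : ∀ j x t, t ∈ I → y j x t ≠ 0)
    -- system (yxx)
    (hyxx : ∀ j x t, t ∈ I →
      pdx (pdx (y j)) x t
        = ((pdx (y j) x t)^2 - (alp j)^2) / (2 * y j x t)
          + 2 * (ucon n y x t - lam j) * y j x t)
    -- system (yt)
    (hyt : ∀ j x t, t ∈ I →
      pdt (y j) x t
        = 2 * pdx (ucon n y) x t * y j x t
          - 2 * (ucon n y x t + 2 * lam j) * pdx (y j) x t)
    -- the auxiliary function f_k
    (k : Fin n)
    (fk : ℝ → ℝ → ℝ)
    (hfk : ∀ x t, fk x t = (pdx (y k) x t + alp k) / (2 * y k x t))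
    -- the transformed functions ỹ and parameters α̃
    (ny : Fin n → ℝ → ℝ → ℝ)
    (hny : ∀ j, j ≠ k → ∀ x t,
      ny j x t = ((pdx (y j) x t - 2 * y j x t * fk x t)^2 - (alp j)^2)
                  / (4 * (lam j - lam k) * y j x t))
    (hnyk : ∀ x t,
      ny k x t = -(y k x t) + 6*t*((fk x t)^2 + lam k) - x
                  - ∑ j ∈ Finset.univ.erase k, (ny j x t + y j x t))
    (nalp : Fin n → ℝ)
    (hnalp : ∀ j, j ≠ k → nalp j = alp j) (hnalpk : nalp k = 1 - alp k)
    -- assuming the transformed functions are nowhere vanishing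
    (hnyne : ∀ j x t, t ∈ I → ny j x t ≠ 0) :
    -- ỹ satisfies (yxx) and (yt) with ũ given by the constraint (uy) for ỹ
    (∀ j x t, t ∈ I →
      pdx (pdx (ny j)) x t
        = ((pdx (ny j) x t)^2 - (nalp j)^2) / (2 * ny j x t)
          + 2 * (ucon n ny x t - lam j) * ny j x t)
    ∧ (∀ j x t, t ∈ I →
      pdt (ny j) x t
        = 2 * pdx (ucon n ny) x t * ny j x t
          - 2 * (ucon n ny x t + 2 * lam j) * pdx (ny j) x t) :=
  statement13_general n lam alp hlam a b I hI hI0 y hysmooth hyne hyxx hyt k fk hfk ny hny hnyk nalp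
    hnalp hnalpk hnyne
end
end

section
/- Let n ≥ 1, λ_1,…,λ_n pairwise distinct reals, α_1,…,α_n reals, and let y_1,…,y_n, f_1,…,f_n : ℝ × I → ℝ be smooth (I an open interval, 0 ∉ I) satisfying the system (yfx), the system (yft), and the constraint (uy'). Fix k, suppose f_j − f_k is nowhere vanishing for every j ≠ k, let (ỹ_j, f̃_j, α̃_j) be the image of (y_j, f_j, α_j) under the Bäcklund transformation B_k, and suppose f̃_j − f̃_k is nowhere vanishing for every j ≠ k. Then applying B_k again to (ỹ_j, f̃_j, α̃_j) returns exactly (y_j, f_j, α_j) for all j; that is, B_k is an involution on solutions. -/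
open Set Function

noncomputable section

/-- applying the Bäcklund transformation `B_k` twice to a solution of (yfx),
(yft), (uy') returns exactly the original data; i.e. `B_k` is an involution on solutions. -/
theorem statement16
    (n : ℕ) (hn : 1 ≤ n)
    (lam alp : Fin n → ℝ) (hlam : Function.Injective lam)
    (a b : ℝ) (I : Set ℝ) (hI : I = Set.Ioo a b) (hI0 : (0:ℝ) ∉ I)
    (y f : Fin n → ℝ → ℝ → ℝ)
    (hysmooth : ∀ j, ContDiffOn ℝ (⊤ : ℕ∞) (uncurry (y j)) (univ ×ˢ I))
    (hfsmooth : ∀ j, ContDiffOn ℝ (⊤ : ℕ∞) (uncurry (f j)) (univ ×ˢ I))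
    -- system (yfx)
    (hyfx : ∀ j x t, t ∈ I →
      pdx (y j) x t = 2 * y j x t * f j x t - alp j
      ∧ pdx (f j) x t = ucon n y x t - (f j x t)^2 - lam j)
    -- system (yft)
    (hyft : ∀ j x t, t ∈ I →
      pdt (y j) x t
        = 2 * pdx (ucon n y) x t * y j x t
          - 2 * (ucon n y x t + 2*lam j) * pdx (y j) x t
      ∧ pdt (f j) x t
        = pdx (fun x' t' => pdx (ucon n y) x' t'
            - 2*(ucon n y x' t' + 2*lam j) * f j x' t') x t)
    (k : Fin n)
    (hfkne : ∀ j, j ≠ k → ∀ x t, t ∈ I → f j x t - f k x t ≠ 0)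
    -- first application of B_k : (y, f, α) ↦ (ỹ, f̃, α̃)
    (ny nf : Fin n → ℝ → ℝ → ℝ) (nalp : Fin n → ℝ)
    (hnf : ∀ j, j ≠ k → ∀ x t,
      nf j x t = -(f k x t) - (lam j - lam k) / (f j x t - f k x t))
    (hnfk : ∀ x t, nf k x t = -(f k x t))
    (hny : ∀ j, j ≠ k → ∀ x t,
      ny j x t = ((f j x t - f k x t) / (lam j - lam k))
                  * ((f j x t - f k x t) * y j x t - alp j))
    (hnyk : ∀ x t,
      ny k x t = -(y k x t) + 6*t*((f k x t)^2 + lam k) - x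
                  - ∑ j ∈ Finset.univ.erase k, (ny j x t + y j x t))
    (hnalp : ∀ j, j ≠ k → nalp j = alp j) (hnalpk : nalp k = 1 - alp k)
    (hnfkne : ∀ j, j ≠ k → ∀ x t, t ∈ I → nf j x t - nf k x t ≠ 0)
    -- second application of B_k : (ỹ, f̃, α̃) ↦ (ỹ̃, f̃̃, α̃̃)
    (nny nnf : Fin n → ℝ → ℝ → ℝ) (nnalp : Fin n → ℝ)
    (hnnf : ∀ j, j ≠ k → ∀ x t,
      nnf j x t = -(nf k x t) - (lam j - lam k) / (nf j x t - nf k x t))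
    (hnnfk : ∀ x t, nnf k x t = -(nf k x t))
    (hnny : ∀ j, j ≠ k → ∀ x t,
      nny j x t = ((nf j x t - nf k x t) / (lam j - lam k))
                   * ((nf j x t - nf k x t) * ny j x t - nalp j))
    (hnnyk : ∀ x t,
      nny k x t = -(ny k x t) + 6*t*((nf k x t)^2 + lam k) - x
                   - ∑ j ∈ Finset.univ.erase k, (nny j x t + ny j x t))
    (hnnalp : ∀ j, j ≠ k → nnalp j = nalp j) (hnnalpk : nnalp k = 1 - nalp k) :
    -- B_k ∘ B_k = id on solutions
    (∀ j x t, t ∈ I → nny j x t = y j x t ∧ nnf j x t = f j x t)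
    ∧ (∀ j, nnalp j = alp j) := by
  have hL : ∀ j : Fin n, j ≠ k → lam j - lam k ≠ 0 :=
    fun j hj => sub_ne_zero.mpr (fun h => hj (hlam h))
  have hf : ∀ j x t, t ∈ I → nnf j x t = f j x t := by
    intro j x t ht
    by_cases hj : j = k
    · subst hj; rw [hnnfk, hnfk]; ring
    · have hD := hfkne j hj x t ht
      have hLj := hL j hj
      have hdiff : nf j x t - nf k x t = -((lam j - lam k)/(f j x t - f k x t)) := by
        rw [hnf j hj, hnfk]; ring
      have key : (lam j - lam k) / -((lam j - lam k) / (f j x t - f k x t))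
          = -(f j x t - f k x t) := by
        rw [div_neg, div_div_eq_mul_div, mul_comm, mul_div_assoc,
          div_self hLj, mul_one]
      rw [hnnf j hj, hdiff, hnfk, key]
      ring
  have hyj : ∀ j, j ≠ k → ∀ x t, t ∈ I → nny j x t = y j x t := by
    intro j hj x t ht
    have hD := hfkne j hj x t ht
    have hLj := hL j hj
    have hdiff : nf j x t - nf k x t = -((lam j - lam k)/(f j x t - f k x t)) := by
      rw [hnf j hj, hnfk]; ring
    rw [hnny j hj, hdiff, hny j hj, hnalp j hj]
    field_simp
    ring
  have hyk : ∀ x t, t ∈ I → nny k x t = y k x t := by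
    intro x t ht
    rw [hnnyk, hnfk, hnyk]
    have hsum : ∑ j ∈ Finset.univ.erase k, (nny j x t + ny j x t)
        = ∑ j ∈ Finset.univ.erase k, (ny j x t + y j x t) := by
      refine Finset.sum_congr rfl fun j hjmem => ?_
      rw [hyj j (Finset.ne_of_mem_erase hjmem) x t ht]
      ring
    rw [hsum]; ring
  refine ⟨fun j x t ht => ⟨?_, hf j x t ht⟩, fun j => ?_⟩
  · by_cases hj : j = k
    · subst hj; exact hyk x t ht
    · exact hyj j hj x t ht
  · by_cases hj : j = k
    · subst hj; rw [hnnalpk, hnalpk]; ring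
    · rw [hnnalp j hj, hnalp j hj]
end
end

section
/- Let n ≥ 2, λ_1,…,λ_n pairwise distinct reals, α_1,…,α_n reals, J ⊆ ℝ an open interval with 0 ∉ J, and let u, y_1,…,y_n, f_1,…,f_n : J → ℝ be smooth functions of x satisfying y_j' = 2 y_j f_j − α_j and f_j' = u − f_j² − λ_j for j = 1,…,n, together with the constraints (y0): y_1 + ⋯ + y_n = −x/2 and 2y_1f_1 + ⋯ + 2y_nf_n − α_1 − ⋯ − α_n = −1/2. Define v := f_n, z_j := f_j − f_n and μ_j := λ_j − λ_n for j = 1,…,n−1, and β := (1/2)(1/2 − α_1 − ⋯ − α_n). Then for j = 1,…,n−1: y_j' = 2 y_j (z_j + v) − α_j and z_j' = −z_j(z_j + 2v) − μ_j; moreover v = (2/x)(y_1 z_1 + ⋯ + y_{n−1} z_{n−1} + β) on J, and u = v' + v² + λ_n. -/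
open Set

/-! Subtracting the Riccati equations for `fⱼ` and `fₙ`, which share the potential `u`, gives the
equation for `zⱼ`. For the constraint, the `j = n` term of `∑ yⱼ (fⱼ - fₙ)` vanishes, so
`∑_{j<n} yⱼ zⱼ = ∑ yⱼ fⱼ - fₙ ∑ yⱼ = ∑ yⱼ fⱼ + x fₙ / 2` by (y0), and the second constraint of
(y0) says `∑ yⱼ fⱼ = -β`. -/

theorem Fin.sum_univ_eq_sum_castLE_add {M : Type*} [AddCommMonoid M] {n : ℕ} (lst : Fin n)
    (hlst : (lst : ℕ) = n - 1) (G : Fin n → M) :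
    ∑ j, G j = ∑ j : Fin (n - 1), G (Fin.castLE (Nat.sub_le n 1) j) + G lst := by
  obtain ⟨m, rfl⟩ : ∃ m, n = m + 1 := ⟨n - 1, by omega⟩
  obtain rfl : lst = Fin.last m := Fin.ext hlst
  exact Fin.sum_univ_castSucc G

theorem Fin.sum_castLE_mul_sub {R : Type*} [CommRing R] {n : ℕ} (lst : Fin n)
    (hlst : (lst : ℕ) = n - 1) (y f : Fin n → R) :
    ∑ j : Fin (n - 1), y (Fin.castLE (Nat.sub_le n 1) j) * (f (Fin.castLE (Nat.sub_le n 1) j) - f lst)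
      = ∑ j, y j * f j - f lst * ∑ j, y j := by
  have h := Fin.sum_univ_eq_sum_castLE_add lst hlst fun j => y j * (f j - f lst)
  rw [sub_self, mul_zero, add_zero] at h
  rw [← h, Finset.mul_sum, ← Finset.sum_sub_distrib]
  exact Finset.sum_congr rfl fun j _ => by ring

theorem deriv_sub_of_riccati {g h : ℝ → ℝ} {x u p q : ℝ}
    (hg : DifferentiableAt ℝ g x) (hh : DifferentiableAt ℝ h x)
    (hg' : deriv g x = u - g x ^ 2 - p) (hh' : deriv h x = u - h x ^ 2 - q) :
    deriv (fun t => g t - h t) x = -(g x - h x) * (g x - h x + 2 * h x) - (p - q) := by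
  rw [deriv_fun_sub hg hh, hg', hh']
  ring

theorem statement17_general
    (n : ℕ)
    (lam alp : Fin n → ℝ)
    (a b : ℝ) (J : Set ℝ) (hJ : J = Set.Ioo a b) (hJ0 : (0:ℝ) ∉ J)
    (u : ℝ → ℝ) (y f : Fin n → ℝ → ℝ)
    (hfsmooth : ∀ j, ContDiffOn ℝ (⊤ : ℕ∞) (f j) J)
    -- system (yfx)
    (hyfx : ∀ j, ∀ x ∈ J,
      deriv (y j) x = 2 * y j x * f j x - alp j
      ∧ deriv (f j) x = u x - (f j x)^2 - lam j)
    -- constraints (y0)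
    (hy0 : ∀ x ∈ J, ∑ j, y j x = -x/2)
    (hf0 : ∀ x ∈ J, (∑ j, 2 * y j x * f j x) - ∑ j, alp j = -(1:ℝ)/2)
    -- the distinguished last index (representing j = n)
    (lst : Fin n) (hlst : (lst : ℕ) = n - 1)
    -- the new variables and parameters
    (v : ℝ → ℝ) (hv : v = f lst)
    (z : Fin (n-1) → ℝ → ℝ)
    (hz : ∀ j : Fin (n-1), ∀ x : ℝ, z j x = f (Fin.castLE (Nat.sub_le n 1) j) x - f lst x)
    (mu : Fin (n-1) → ℝ)
    (hmu : ∀ j : Fin (n-1), mu j = lam (Fin.castLE (Nat.sub_le n 1) j) - lam lst)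
    (bet : ℝ) (hbet : bet = (1/2) * (1/2 - ∑ j, alp j)) :
    -- conclusion: system (yzx), the constraint (v), and recovery of the potential
    (∀ j : Fin (n-1), ∀ x ∈ J,
      deriv (y (Fin.castLE (Nat.sub_le n 1) j)) x
        = 2 * y (Fin.castLE (Nat.sub_le n 1) j) x * (z j x + v x)
          - alp (Fin.castLE (Nat.sub_le n 1) j)
      ∧ deriv (z j) x = -(z j x) * (z j x + 2 * v x) - mu j)
    ∧ (∀ x ∈ J,
        v x = (2/x) * ((∑ j : Fin (n-1), y (Fin.castLE (Nat.sub_le n 1) j) x * z j x) + bet))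
    ∧ (∀ x ∈ J, u x = deriv v x + (v x)^2 + lam lst) := by
  subst hv hJ hbet
  have hdiff : ∀ j, ∀ x ∈ Ioo a b, DifferentiableAt ℝ (f j) x := fun j x hx =>
    ((hfsmooth j).differentiableOn (by simp)).differentiableAt (Ioo_mem_nhds hx.1 hx.2)
  refine ⟨fun j x hx => ⟨?_, ?_⟩, fun x hx => ?_, fun x hx => ?_⟩
  · rw [(hyfx _ x hx).1, hz]
    ring
  · rw [funext (hz j), deriv_sub_of_riccati (hdiff _ x hx) (hdiff _ x hx) (hyfx _ x hx).2
      (hyfx _ x hx).2, hmu]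
  · have hx0 : x ≠ 0 := ne_of_mem_of_not_mem hx hJ0
    simp_rw [hz]
    rw [Fin.sum_castLE_mul_sub lst hlst (fun j => y j x) (fun j => f j x), hy0 x hx]
    have hS : ∑ j, 2 * y j x * f j x = 2 * ∑ j, y j x * f j x := by
      rw [Finset.mul_sum]
      exact Finset.sum_congr rfl fun j _ => by ring
    field_simp
    linear_combination (-2) * hf0 x hx + 2 * hS
  · linarith [(hyfx lst x hx).2]

/-- on the singular line `t = 0`, the system (yfx) with the constraints (y0)
reduces, under `v = fₙ`, `zⱼ = fⱼ − fₙ`, `μⱼ = λⱼ − λₙ`, `2β = 1/2 − α₁ − ⋯ − αₙ`, to the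
symmetric system (yzx) with the constraint (v); moreover `u = v' + v² + λₙ`. -/
theorem statement17
    (n : ℕ) (hn : 2 ≤ n)
    (lam alp : Fin n → ℝ) (hlam : Function.Injective lam)
    (a b : ℝ) (J : Set ℝ) (hJ : J = Set.Ioo a b) (hJ0 : (0:ℝ) ∉ J)
    (u : ℝ → ℝ) (y f : Fin n → ℝ → ℝ)
    (husmooth : ContDiffOn ℝ (⊤ : ℕ∞) u J)
    (hysmooth : ∀ j, ContDiffOn ℝ (⊤ : ℕ∞) (y j) J)
    (hfsmooth : ∀ j, ContDiffOn ℝ (⊤ : ℕ∞) (f j) J)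
    -- system (yfx)
    (hyfx : ∀ j, ∀ x ∈ J,
      deriv (y j) x = 2 * y j x * f j x - alp j
      ∧ deriv (f j) x = u x - (f j x)^2 - lam j)
    -- constraints (y0)
    (hy0 : ∀ x ∈ J, ∑ j, y j x = -x/2)
    (hf0 : ∀ x ∈ J, (∑ j, 2 * y j x * f j x) - ∑ j, alp j = -(1:ℝ)/2)
    -- the distinguished last index (representing j = n)
    (lst : Fin n) (hlst : (lst : ℕ) = n - 1)
    -- the new variables and parameters
    (v : ℝ → ℝ) (hv : v = f lst)
    (z : Fin (n-1) → ℝ → ℝ)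
    (hz : ∀ j : Fin (n-1), ∀ x : ℝ, z j x = f (Fin.castLE (Nat.sub_le n 1) j) x - f lst x)
    (mu : Fin (n-1) → ℝ)
    (hmu : ∀ j : Fin (n-1), mu j = lam (Fin.castLE (Nat.sub_le n 1) j) - lam lst)
    (bet : ℝ) (hbet : bet = (1/2) * (1/2 - ∑ j, alp j)) :
    -- conclusion: system (yzx), the constraint (v), and recovery of the potential
    (∀ j : Fin (n-1), ∀ x ∈ J,
      deriv (y (Fin.castLE (Nat.sub_le n 1) j)) x
        = 2 * y (Fin.castLE (Nat.sub_le n 1) j) x * (z j x + v x)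
          - alp (Fin.castLE (Nat.sub_le n 1) j)
      ∧ deriv (z j) x = -(z j x) * (z j x + 2 * v x) - mu j)
    ∧ (∀ x ∈ J,
        v x = (2/x) * ((∑ j : Fin (n-1), y (Fin.castLE (Nat.sub_le n 1) j) x * z j x) + bet))
    ∧ (∀ x ∈ J, u x = deriv v x + (v x)^2 + lam lst) :=
  statement17_general n lam alp a b J hJ hJ0 u y f hfsmooth hyfx hy0 hf0 lst hlst v hv z hz mu hmu
    bet hbet
end

section
/- Let n ≥ 2, let μ_1,…,μ_{n−1} be pairwise distinct nonzero reals, α_1,…,α_{n−1}, β reals, J ⊆ ℝ an open interval with 0 ∉ J, and let y_1,…,y_{n−1}, z_1,…,z_{n−1} : J → ℝ be smooth satisfying the system (yzx) with the constraint (v). Define y_n := −x/2 − (y_1 + ⋯ + y_{n−1}) and α_n := 1/2 − 2β − (α_1 + ⋯ + α_{n−1}). Fix k ∈ {1,…,n−1}, suppose z_k is nowhere vanishing and z_j − z_k is nowhere vanishing for each j ≠ k, and define (the Bäcklund transformation B_k): z̃_j := μ_k/z_k − (μ_j − μ_k)/(z_j − z_k) for j ≠ k, z̃_k := μ_k/z_k;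 ỹ_j := ((z_j − z_k)/(μ_j − μ_k))·((z_j − z_k) y_j − α_j) for j ≠ k; ỹ_k := −x/2 − Σ_{j≠k, j≤n−1} ỹ_j + (z_k/μ_k)(z_k y_n + α_n); α̃_j := α_j for j ≠ k, α̃_k := 1 − α_k, β̃ := β + α_k − 1/2. Then (ỹ_j, z̃_j), j = 1,…,n−1, satisfy the system (yzx) with the constraint (v) for the parameters α̃_1,…,α̃_{n−1}, β̃ and the same μ_1,…,μ_{n−1}. -/
/-!
Everything is checked pointwise. The key identity is that the transformed constraint is
`ṽ = -v - z_k - μ_k / z_k`; granted this, the Riccati equations for `z̃` and the equations for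
`ỹ_j`, `j ≠ k`, are direct computations. The equation for `ỹ_k` is not computed: adjoin the
`n`-th component `(y_n, z_n = 0, μ_n = 0, α_n)`. Then `∑ y = -x/2`, `∑ α = 1/2 - 2β` and the
constraint make each of the `n` equations a consequence of the other `n - 1`, and `B_k` sends the
`n`-th component to `(-(z_k / μ_k) (z_k y_n + α_n), 0)` by the formula it uses for `j ≠ k`, while
preserving these relations.
-/

open Finset

theorem hasDerivAt_backlund_zk {zk : ℝ → ℝ} {μk v x : ℝ}
    (hzk : HasDerivAt zk (-zk x * (zk x + 2 * v) - μk) x) (hzk0 : zk x ≠ 0) :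
    HasDerivAt (fun t => μk / zk t)
      (-(μk / zk x) * (μk / zk x + 2 * (-v - zk x - μk / zk x)) - μk) x := by
  refine ((hasDerivAt_const x μk).fun_div hzk hzk0).congr_deriv ?_
  field_simp
  ring

theorem hasDerivAt_backlund_z {zi zk : ℝ → ℝ} {μi μk v x : ℝ}
    (hzi : HasDerivAt zi (-zi x * (zi x + 2 * v) - μi) x)
    (hzk : HasDerivAt zk (-zk x * (zk x + 2 * v) - μk) x) (hzk0 : zk x ≠ 0)
    (hne : zi x - zk x ≠ 0) :
    HasDerivAt (fun t => μk / zk t - (μi - μk) / (zi t - zk t))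
      (-(μk / zk x - (μi - μk) / (zi x - zk x))
        * (μk / zk x - (μi - μk) / (zi x - zk x) + 2 * (-v - zk x - μk / zk x)) - μi) x := by
  refine ((hasDerivAt_backlund_zk hzk hzk0).fun_sub
    ((hasDerivAt_const x (μi - μk)).fun_div (hzi.fun_sub hzk) hne)).congr_deriv ?_
  field_simp
  ring

theorem hasDerivAt_backlund_y {yi zi zk : ℝ → ℝ} {μi μk αi v x : ℝ}
    (hyi : HasDerivAt yi (2 * yi x * (zi x + v) - αi) x)
    (hzi : HasDerivAt zi (-zi x * (zi x + 2 * v) - μi) x)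
    (hzk : HasDerivAt zk (-zk x * (zk x + 2 * v) - μk) x)
    (hne : zi x - zk x ≠ 0) (hμ : μi ≠ μk) :
    HasDerivAt (fun t => (zi t - zk t) / (μi - μk) * ((zi t - zk t) * yi t - αi))
      (2 * ((zi x - zk x) / (μi - μk) * ((zi x - zk x) * yi x - αi))
        * (μk / zk x - (μi - μk) / (zi x - zk x) + (-v - zk x - μk / zk x)) - αi) x := by
  have hμ' : μi - μk ≠ 0 := sub_ne_zero.mpr hμ
  refine (((hzi.fun_sub hzk).div_const (μi - μk)).fun_mul
    (((hzi.fun_sub hzk).fun_mul hyi).sub_const αi)).congr_deriv ?_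
  field_simp
  ring

section

variable {ι : Type*} [Fintype ι]

theorem hasDerivAt_of_sum_eq_neg_half [DecidableEq ι] (m : ι) {Y : ι → ℝ → ℝ} {Z α : ι → ℝ}
    {β v x : ℝ} (hY : ∀ t, ∑ i, Y i t = -t / 2) (hα : ∑ i, α i = 1 / 2 - 2 * β)
    (hv : x * v = 2 * (∑ i, Y i x * Z i + β))
    (h : ∀ i ≠ m, HasDerivAt (Y i) (2 * Y i x * (Z i + v) - α i) x) :
    HasDerivAt (Y m) (2 * Y m x * (Z m + v) - α m) x := by
  have hYm : Y m = fun t => -t / 2 - ∑ i ∈ univ.erase m, Y i t := funext fun t => by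
    rw [← hY t, ← add_sum_erase _ _ (mem_univ m)]; ring
  rw [hYm]
  refine (((hasDerivAt_id x).fun_neg.div_const 2).fun_sub
    (HasDerivAt.fun_sum (u := univ.erase m) fun i hi => h i (ne_of_mem_erase hi))).congr_deriv ?_
  simp only [mul_add, mul_assoc, sum_sub_distrib, sum_add_distrib, ← mul_sum, ← sum_mul,
    sum_erase_eq_sub (mem_univ m)]
  linear_combination hv + 2 * Z m * hY x + hα

theorem hasDerivAt_neg_half_sub_sum {y : ι → ℝ → ℝ} {yn : ℝ → ℝ} {z α : ι → ℝ} {αn β v x : ℝ}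
    (hy : ∀ i, HasDerivAt (y i) (2 * y i x * (z i + v) - α i) x)
    (hyn : ∀ t, yn t = -t / 2 - ∑ i, y i t) (hαn : αn = 1 / 2 - 2 * β - ∑ i, α i)
    (hv : x * v = 2 * (∑ i, y i x * z i + β)) :
    HasDerivAt yn (2 * yn x * v - αn) x := by
  classical
  simpa using hasDerivAt_of_sum_eq_neg_half none (Y := fun o => o.elim yn y)
    (Z := fun o => o.elim 0 z) (α := fun o => o.elim αn α) (β := β)
    (by simp [Fintype.sum_option, hyn]) (by simp [Fintype.sum_option, hαn])
    (by simpa [Fintype.sum_option] using hv) (by simpa [Option.forall] using hy)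

variable [DecidableEq ι]

theorem backlund_constraint (k : ι) {μ α y z ny nz : ι → ℝ} {yn αn β nβ v x : ℝ}
    (hμ : ∀ i ≠ k, μ i ≠ μ k) (hμk : μ k ≠ 0) (hzk : z k ≠ 0) (hne : ∀ i ≠ k, z i - z k ≠ 0)
    (hv : x * v = 2 * (∑ i, y i * z i + β)) (hyn : yn = -x / 2 - ∑ i, y i)
    (hαn : αn = 1 / 2 - 2 * β - ∑ i, α i)
    (hnz : ∀ i ≠ k, nz i = μ k / z k - (μ i - μ k) / (z i - z k)) (hnzk : nz k = μ k / z k)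
    (hny : ∀ i ≠ k, ny i = (z i - z k) / (μ i - μ k) * ((z i - z k) * y i - α i))
    (hnyk : ny k = -x / 2 - ∑ i ∈ univ.erase k, ny i + z k / μ k * (z k * yn + αn))
    (hnβ : nβ = β + α k - 1 / 2) :
    x * (-v - z k - μ k / z k) = 2 * (∑ i, ny i * nz i + nβ) := by
  have hterm : ∀ i ∈ univ.erase k,
      ny i * nz i = μ k / z k * ny i - (y i * (z i - z k) - α i) := by
    intro i hi
    have hik := ne_of_mem_erase hi
    have hμ' : μ i - μ k ≠ 0 := sub_ne_zero.mpr (hμ i hik)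
    have := hne i hik
    rw [hnz i hik, hny i hik]
    field_simp
  have hrest : ∑ i ∈ univ.erase k, (y i * (z i - z k) - α i)
      = ∑ i, y i * z i - (∑ i, y i) * z k - ∑ i, α i + α k := by
    rw [sum_erase_eq_sub (mem_univ k)]
    simp only [mul_sub, sum_sub_distrib, ← sum_mul]
    ring
  rw [← add_sum_erase _ _ (mem_univ k), sum_congr rfl hterm, sum_sub_distrib, ← mul_sum, hrest,
    hnzk, hnβ, hnyk, hyn, hαn]
  field_simp
  linear_combination -z k * hv

theorem hasDerivAt_backlund_yk (k : ι) {ny : ι → ℝ → ℝ} {zk yn : ℝ → ℝ} {nz α nα : ι → ℝ}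
    {μk αn β nβ v x : ℝ}
    (hzk : HasDerivAt zk (-zk x * (zk x + 2 * v) - μk) x) (hzk0 : zk x ≠ 0) (hμk : μk ≠ 0)
    (hyn : HasDerivAt yn (2 * yn x * v - αn) x)
    (hny : ∀ i ≠ k, HasDerivAt (ny i) (2 * ny i x * (nz i + (-v - zk x - μk / zk x)) - nα i) x)
    (hnyk : ∀ t, ny k t = -t / 2 - ∑ i ∈ univ.erase k, ny i t + zk t / μk * (zk t * yn t + αn))
    (hαn : αn = 1 / 2 - 2 * β - ∑ i, α i) (hnα : ∀ i ≠ k, nα i = α i) (hnαk : nα k = 1 - α k)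
    (hnβ : nβ = β + α k - 1 / 2)
    (hnv : x * (-v - zk x - μk / zk x) = 2 * (∑ i, ny i x * nz i + nβ)) :
    HasDerivAt (ny k) (2 * ny k x * (nz k + (-v - zk x - μk / zk x)) - nα k) x := by
  -- the image of the `n`-th component under the formula for `j ≠ k`
  set nyn : ℝ → ℝ := fun t => (0 - zk t) / (0 - μk) * ((0 - zk t) * yn t - αn) with hnyn
  have hnyn' : HasDerivAt nyn (2 * nyn x * (-v - zk x - μk / zk x) - αn) x := by
    refine (hasDerivAt_backlund_y (zi := fun _ => 0) (μi := 0) (by rwa [zero_add])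
      (by simpa using hasDerivAt_const x (0 : ℝ)) hzk (by simpa using hzk0)
      hμk.symm).congr_deriv ?_
    rw [hnyn]
    field_simp
    ring
  have hnα_sum : αn + ∑ i, nα i = 1 / 2 - 2 * nβ := by
    rw [← add_sum_erase _ _ (mem_univ k), sum_congr rfl fun i hi => hnα i (ne_of_mem_erase hi),
      sum_erase_eq_sub (mem_univ k), hnαk, hαn, hnβ]
    ring
  exact hasDerivAt_of_sum_eq_neg_half (some k) (Y := fun o => o.elim nyn ny)
    (Z := fun o => o.elim 0 nz) (α := fun o => o.elim αn nα) (β := nβ)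
    (fun t => by
      rw [Fintype.sum_option, ← add_sum_erase _ _ (mem_univ k)]
      simp only [Option.elim, hnyn, hnyk t]
      field_simp
      ring)
    (by simpa [Fintype.sum_option] using hnα_sum) (by simpa [Fintype.sum_option] using hnv)
    (by simpa [Option.forall] using ⟨hnyn', hny⟩)

end

theorem statement19_general
    (n : ℕ)
    (mu : Fin (n-1) → ℝ) (hmu : Function.Injective mu) (hmune : ∀ j, mu j ≠ 0)
    (alp : Fin (n-1) → ℝ) (bet : ℝ)
    (a b : ℝ) (J : Set ℝ) (hJ : J = Set.Ioo a b) (hJ0 : (0:ℝ) ∉ J)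
    (y z : Fin (n-1) → ℝ → ℝ)
    (hysmooth : ∀ j, ContDiffOn ℝ (⊤ : ℕ∞) (y j) J)
    (hzsmooth : ∀ j, ContDiffOn ℝ (⊤ : ℕ∞) (z j) J)
    -- the constraint (v)
    (v : ℝ → ℝ)
    (hv : ∀ x ∈ J, v x = (2/x) * ((∑ j, y j x * z j x) + bet))
    -- the system (yzx)
    (hyzx : ∀ j, ∀ x ∈ J,
      deriv (y j) x = 2 * y j x * (z j x + v x) - alp j
      ∧ deriv (z j) x = -(z j x) * (z j x + 2 * v x) - mu j)
    -- the "extra" variable and parameter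
    (yn : ℝ → ℝ) (hyn : ∀ x : ℝ, yn x = -x/2 - ∑ j, y j x)
    (alpn : ℝ) (halpn : alpn = 1/2 - 2*bet - ∑ j, alp j)
    -- the fixed index and the nondegeneracy assumptions
    (k : Fin (n-1))
    (hzkne : ∀ x ∈ J, z k x ≠ 0)
    (hzdiff : ∀ j, j ≠ k → ∀ x ∈ J, z j x - z k x ≠ 0)
    -- the Bäcklund transformation B_k
    (ny nz : Fin (n-1) → ℝ → ℝ) (nalp : Fin (n-1) → ℝ) (nbet : ℝ)
    (hnz : ∀ j, j ≠ k → ∀ x : ℝ,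
      nz j x = mu k / z k x - (mu j - mu k) / (z j x - z k x))
    (hnzk : ∀ x : ℝ, nz k x = mu k / z k x)
    (hny : ∀ j, j ≠ k → ∀ x : ℝ,
      ny j x = ((z j x - z k x) / (mu j - mu k)) * ((z j x - z k x) * y j x - alp j))
    (hnyk : ∀ x : ℝ,
      ny k x = -x/2 - (∑ j ∈ Finset.univ.erase k, ny j x)
                + (z k x / mu k) * (z k x * yn x + alpn))
    (hnalp : ∀ j, j ≠ k → nalp j = alp j) (hnalpk : nalp k = 1 - alp k)
    (hnbet : nbet = bet + alp k - 1/2) :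
    -- conclusion: (ỹ, z̃) satisfy (yzx) with the constraint (v) for (α̃, β̃)
    ∀ j, ∀ x ∈ J,
      deriv (ny j) x
        = 2 * ny j x * (nz j x + (2/x) * ((∑ i, ny i x * nz i x) + nbet)) - nalp j
      ∧ deriv (nz j) x
        = -(nz j x) * (nz j x + 2 * ((2/x) * ((∑ i, ny i x * nz i x) + nbet))) - mu j := by
  intro j x hx
  have hx0 : x ≠ 0 := fun h => hJ0 (h ▸ hx)
  have hJx : J ∈ nhds x := by rw [hJ] at hx ⊢; exact Ioo_mem_nhds hx.1 hx.2
  have hy : ∀ i, HasDerivAt (y i) (2 * y i x * (z i x + v x) - alp i) x := fun i =>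
    (hyzx i x hx).1 ▸ (((hysmooth i).contDiffAt hJx).differentiableAt (by simp)).hasDerivAt
  have hz : ∀ i, HasDerivAt (z i) (-z i x * (z i x + 2 * v x) - mu i) x := fun i =>
    (hyzx i x hx).2 ▸ (((hzsmooth i).contDiffAt hJx).differentiableAt (by simp)).hasDerivAt
  have hvx : x * v x = 2 * (∑ i, y i x * z i x + bet) := by rw [hv x hx]; field_simp
  have hnv : x * (-v x - z k x - mu k / z k x) = 2 * (∑ i, ny i x * nz i x + nbet) :=
    backlund_constraint k (fun i hi => hmu.ne hi) (hmune k) (hzkne x hx)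
      (fun i hi => hzdiff i hi x hx) hvx (hyn x) halpn (fun i hi => hnz i hi x) (hnzk x)
      (fun i hi => hny i hi x) (hnyk x) hnbet
  have hny' : ∀ i ≠ k, HasDerivAt (ny i)
      (2 * ny i x * (nz i x + (-v x - z k x - mu k / z k x)) - nalp i) x := fun i hi => by
    rw [funext (hny i hi), hnz i hi x, hnalp i hi]
    exact hasDerivAt_backlund_y (hy i) (hz i) (hz k) (hzdiff i hi x hx) (hmu.ne hi)
  rw [show 2 / x * (∑ i, ny i x * nz i x + nbet) = -v x - z k x - mu k / z k x by
    rw [div_mul_eq_mul_div, ← hnv]; field_simp]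
  by_cases hjk : j = k
  · rw [hjk]
    refine ⟨(hasDerivAt_backlund_yk k (hz k) (hzkne x hx) (hmune k)
      (hasDerivAt_neg_half_sub_sum hy hyn halpn hvx) hny' hnyk halpn hnalp hnalpk hnbet
      hnv).deriv, ?_⟩
    rw [funext hnzk]
    exact (hasDerivAt_backlund_zk (hz k) (hzkne x hx)).deriv
  · refine ⟨(hny' j hjk).deriv, ?_⟩
    rw [funext (hnz j hjk)]
    exact (hasDerivAt_backlund_z (hz j) (hz k) (hzkne x hx) (hzdiff j hjk x hx)).deriv

/-- the Bäcklund transformation `B_k` for the t = 0 system (yzx), (v)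
maps solutions with parameters `(α, β)` to solutions with parameters
`α̃_k = 1 − α_k`, `α̃_j = α_j` (`j ≠ k`), `β̃ = β + α_k − 1/2`, and the same `μ`'s. -/
theorem statement19
    (n : ℕ) (hn : 2 ≤ n)
    (mu : Fin (n-1) → ℝ) (hmu : Function.Injective mu) (hmune : ∀ j, mu j ≠ 0)
    (alp : Fin (n-1) → ℝ) (bet : ℝ)
    (a b : ℝ) (J : Set ℝ) (hJ : J = Set.Ioo a b) (hJ0 : (0:ℝ) ∉ J)
    (y z : Fin (n-1) → ℝ → ℝ)
    (hysmooth : ∀ j, ContDiffOn ℝ (⊤ : ℕ∞) (y j) J)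
    (hzsmooth : ∀ j, ContDiffOn ℝ (⊤ : ℕ∞) (z j) J)
    -- the constraint (v)
    (v : ℝ → ℝ)
    (hv : ∀ x ∈ J, v x = (2/x) * ((∑ j, y j x * z j x) + bet))
    -- the system (yzx)
    (hyzx : ∀ j, ∀ x ∈ J,
      deriv (y j) x = 2 * y j x * (z j x + v x) - alp j
      ∧ deriv (z j) x = -(z j x) * (z j x + 2 * v x) - mu j)
    -- the "extra" variable and parameter
    (yn : ℝ → ℝ) (hyn : ∀ x : ℝ, yn x = -x/2 - ∑ j, y j x)
    (alpn : ℝ) (halpn : alpn = 1/2 - 2*bet - ∑ j, alp j)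
    -- the fixed index and the nondegeneracy assumptions
    (k : Fin (n-1))
    (hzkne : ∀ x ∈ J, z k x ≠ 0)
    (hzdiff : ∀ j, j ≠ k → ∀ x ∈ J, z j x - z k x ≠ 0)
    -- the Bäcklund transformation B_k
    (ny nz : Fin (n-1) → ℝ → ℝ) (nalp : Fin (n-1) → ℝ) (nbet : ℝ)
    (hnz : ∀ j, j ≠ k → ∀ x : ℝ,
      nz j x = mu k / z k x - (mu j - mu k) / (z j x - z k x))
    (hnzk : ∀ x : ℝ, nz k x = mu k / z k x)
    (hny : ∀ j, j ≠ k → ∀ x : ℝ,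
      ny j x = ((z j x - z k x) / (mu j - mu k)) * ((z j x - z k x) * y j x - alp j))
    (hnyk : ∀ x : ℝ,
      ny k x = -x/2 - (∑ j ∈ Finset.univ.erase k, ny j x)
                + (z k x / mu k) * (z k x * yn x + alpn))
    (hnalp : ∀ j, j ≠ k → nalp j = alp j) (hnalpk : nalp k = 1 - alp k)
    (hnbet : nbet = bet + alp k - 1/2) :
    -- conclusion: (ỹ, z̃) satisfy (yzx) with the constraint (v) for (α̃, β̃)
    ∀ j, ∀ x ∈ J,
      deriv (ny j) x
        = 2 * ny j x * (nz j x + (2/x) * ((∑ i, ny i x * nz i x) + nbet)) - nalp j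
      ∧ deriv (nz j) x
        = -(nz j x) * (nz j x + 2 * ((2/x) * ((∑ i, ny i x * nz i x) + nbet))) - mu j :=
  statement19_general n mu hmu hmune alp bet a b J hJ hJ0 y z hysmooth hzsmooth v hv hyzx yn hyn
    alpn halpn k hzkne hzdiff ny nz nalp nbet hnz hnzk hny hnyk hnalp hnalpk hnbet
end
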